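/- arXiv:2311.09190 — 4 statements merged into one kernel-verified Lean document; each statement's English description precedes it below -/
import Mathlib

section
/- For any real square matrix S of size N×N, the supremum over orthogonal matrices U of Tr(US) equals the Schatten-1 norm (nuclear norm) of S, i.e., sup_{U orthogonal} Tr(US) = Tr(√(SᵀS)), and the supremum is attained. -/
open Matrix

/-- The positive semidefinite square root of a positive semidefinite matrix, as defined in
Mathlib (December 2024) before its removal. -/
noncomputable def Matrix.PosSemidef.sqrt {n 𝕜 : Type*} [Fintype n] [DecidableEq n] [RCLike 𝕜] [PartialOrder 𝕜]
    {A : Matrix n n 𝕜} (hA : A.PosSemidef) : Matrix n n 𝕜 :=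
  hA.isHermitian.eigenvectorUnitary.1 * diagonal ((↑) ∘ (√·) ∘ hA.isHermitian.eigenvalues) *
  (star hA.isHermitian.eigenvectorUnitary : Matrix n n 𝕜)

lemma Matrix.PosSemidef.sqrt_mul_self {N : ℕ} {A : Matrix (Fin N) (Fin N) ℝ} (hA : A.PosSemidef) :
    hA.sqrt * hA.sqrt = A := by
  set U : Matrix (Fin N) (Fin N) ℝ := hA.isHermitian.eigenvectorUnitary.1 with hUdef
  have hU : star U * U = 1 := Matrix.mem_unitaryGroup_iff'.mp hA.isHermitian.eigenvectorUnitary.2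
  have hspec := hA.isHermitian.spectral_theorem
  rw [Unitary.conjStarAlgAut_apply] at hspec
  unfold Matrix.PosSemidef.sqrt
  conv_rhs => rw [hspec]
  simp only [Matrix.mul_assoc]
  rw [← Matrix.mul_assoc (star U) U, hU, Matrix.one_mul, ← Matrix.mul_assoc (diagonal _) (diagonal _),
    diagonal_mul_diagonal]
  congr 3
  funext i
  simp [Real.mul_self_sqrt (hA.eigenvalues_nonneg i)]

lemma Matrix.PosSemidef.posSemidef_sqrt {N : ℕ} {A : Matrix (Fin N) (Fin N) ℝ} (hA : A.PosSemidef) :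
    hA.sqrt.PosSemidef := by
  unfold Matrix.PosSemidef.sqrt
  rw [Matrix.star_eq_conjTranspose]
  refine (Matrix.posSemidef_diagonal_iff.mpr fun i => ?_).mul_mul_conjTranspose_same _
  exact Real.sqrt_nonneg _

lemma aux_trace_le {N : ℕ} {M P : Matrix (Fin N) (Fin N) ℝ}
    (hM : M * Mᵀ = 1) (hP : P.PosSemidef) : (M * P).trace ≤ P.trace := by
  have hMtM : Mᵀ * M = 1 := mul_eq_one_comm.mp hM
  set Q := hP.sqrt with hQdef
  have hQP : Q * Q = P := hP.sqrt_mul_self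
  have hQsym : Qᵀ = Q := by
    have := hP.posSemidef_sqrt.1
    rw [← Matrix.conjTranspose_eq_transpose_of_trivial]; exact this
  have hQe : ∀ i j, Q i j = Q j i := fun i j => congrFun (congrFun hQsym j) i
  have h1 : (M * P).trace = (Q * (M * Q)).trace := by
    rw [← hQP, ← Matrix.mul_assoc, Matrix.trace_mul_comm (M * Q) Q]
  rw [h1]
  have key : ∀ x : Fin N → ℝ, x ⬝ᵥ (M *ᵥ x) ≤ x ⬝ᵥ x := by
    intro x
    have hnorm : (M *ᵥ x) ⬝ᵥ (M *ᵥ x) = x ⬝ᵥ x := by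
      rw [Matrix.dotProduct_mulVec, ← Matrix.mulVec_transpose, Matrix.mulVec_mulVec,
        hMtM, Matrix.one_mulVec]
    have cs : (x ⬝ᵥ (M *ᵥ x))^2 ≤ (x ⬝ᵥ x) * ((M *ᵥ x) ⬝ᵥ (M *ᵥ x)) := by
      have h := Finset.sum_mul_sq_le_sq_mul_sq Finset.univ x (M *ᵥ x)
      simpa [dotProduct, pow_two, Finset.sum_mul_sq_le_sq_mul_sq] using h
    have h0 : 0 ≤ x ⬝ᵥ x := Finset.sum_nonneg fun i _ => mul_self_nonneg _
    nlinarith [cs, h0, hnorm]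
  -- trace (Q * (M * Q)) = ∑ i, col_i ⬝ᵥ M *ᵥ col_i
  have h2 : (Q * (M * Q)).trace = ∑ i, (fun k => Q k i) ⬝ᵥ (M *ᵥ (fun k => Q k i)) := by
    simp only [Matrix.trace, Matrix.diag, Matrix.mul_apply, dotProduct, Matrix.mulVec,
      Finset.mul_sum, Finset.sum_mul]
    refine Finset.sum_congr rfl fun i _ => Finset.sum_congr rfl fun j _ => ?_
    refine Finset.sum_congr rfl fun x _ => ?_
    rw [hQe i j]; try ring
  have h3 : P.trace = ∑ i, (fun k => Q k i) ⬝ᵥ (fun k => Q k i) := by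
    rw [← hQP]
    simp only [Matrix.trace, Matrix.diag, Matrix.mul_apply, dotProduct]
    refine Finset.sum_congr rfl fun i _ => Finset.sum_congr rfl fun j _ => ?_
    rw [hQe i j]
  rw [h2, h3]
  exact Finset.sum_le_sum fun i _ => key _

lemma aux_polar {N : ℕ} (S : Matrix (Fin N) (Fin N) ℝ) :
    ∃ W : Matrix (Fin N) (Fin N) ℝ, W * Wᵀ = 1 ∧
      S = W * (Matrix.posSemidef_conjTranspose_mul_self S).sqrt := by
  classical
  set hPsd := Matrix.posSemidef_conjTranspose_mul_self S with hPsddef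
  set hA : (Sᴴ * S).IsHermitian := hPsd.1 with hAdef
  set d : Fin N → ℝ := hA.eigenvalues with hddef
  set V : Matrix (Fin N) (Fin N) ℝ := (hA.eigenvectorUnitary : Matrix (Fin N) (Fin N) ℝ) with hVdef
  have hVVs : V * star V = 1 := Matrix.mem_unitaryGroup_iff.mp hA.eigenvectorUnitary.2
  have hVsV : star V * V = 1 := Matrix.mem_unitaryGroup_iff'.mp hA.eigenvectorUnitary.2
  have hVt : star V = Vᵀ := by
    rw [Matrix.star_eq_conjTranspose, Matrix.conjTranspose_eq_transpose_of_trivial]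
  rw [hVt] at hVVs hVsV
  have hd : ∀ i, 0 ≤ d i := fun i => hPsd.eigenvalues_nonneg i
  -- Gram matrix of columns of S * V is diagonal d
  have hGram : (S * V)ᴴ * (S * V) = diagonal d := by
    have h := hA.conjStarAlgAut_star_eigenvectorUnitary
    rw [Unitary.conjStarAlgAut_apply, Unitary.coe_star, star_star] at h
    rw [Matrix.star_eq_conjTranspose, ← hVdef] at h
    rw [Matrix.conjTranspose_mul]
    calc Vᴴ * Sᴴ * (S * V) = Vᴴ * (Sᴴ * S) * V := by
          simp only [Matrix.mul_assoc]
      _ = diagonal (RCLike.ofReal ∘ d) := h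
      _ = diagonal d := by rw [RCLike.ofReal_real_eq_id]; rfl
  set c : Fin N → EuclideanSpace ℝ (Fin N) := fun i => WithLp.toLp 2 (fun k => (S * V) k i) with hcdef
  have hinner : ∀ i j, (inner ℝ (c i) (c j) : ℝ) = diagonal d i j := by
    intro i j
    have h := congrFun (congrFun hGram i) j
    simp only [Matrix.mul_apply, Matrix.conjTranspose_apply, star_trivial] at h
    simp only [PiLp.inner_apply, RCLike.inner_apply, starRingEnd_apply, star_trivial, hcdef]
    rw [← h]; simp only [Matrix.mul_apply]
    exact Finset.sum_congr rfl fun _ _ => mul_comm _ _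
  set v : Fin N → EuclideanSpace ℝ (Fin N) := fun i => (Real.sqrt (d i))⁻¹ • c i with hvdef
  have hortho : Orthonormal ℝ (Set.domRestrict {i | d i ≠ 0} v) := by
    rw [orthonormal_iff_ite]
    rintro ⟨i, hi⟩ ⟨j, hj⟩
    simp only [Set.domRestrict_apply, hvdef, real_inner_smul_left, real_inner_smul_right,
      hinner i j, Subtype.mk_eq_mk]
    by_cases hij : i = j
    · subst hij
      simp only [if_pos rfl, Matrix.diagonal_apply_eq]
      have hdi : 0 < d i := lt_of_le_of_ne (hd i) (Ne.symm hi)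
      rw [← Real.sqrt_mul_self (hd i)]
      field_simp
      simp [Real.sq_sqrt, Real.sqrt_nonneg]
    · simp [hij, Matrix.diagonal_apply_ne _ hij]
  have card : Module.finrank ℝ (EuclideanSpace ℝ (Fin N)) = Fintype.card (Fin N) := by simp
  obtain ⟨b, hb⟩ := hortho.exists_orthonormalBasis_extension_of_card_eq card
  set U : Matrix (Fin N) (Fin N) ℝ := Matrix.of (fun k i => b i k) with hUdef
  have hUtU : Uᵀ * U = 1 := by
    ext i j
    have hbij := (orthonormal_iff_ite.mp b.orthonormal) i j
    simp only [PiLp.inner_apply, RCLike.inner_apply, starRingEnd_apply, star_trivial] at hbij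
    simp only [Matrix.mul_apply, Matrix.transpose_apply, hUdef, Matrix.of_apply,
      Matrix.one_apply]
    rw [← hbij]
    exact Finset.sum_congr rfl fun _ _ => mul_comm _ _
  have hUUt : U * Uᵀ = 1 := mul_eq_one_comm.mp hUtU
  have hcol : U * diagonal (Real.sqrt ∘ d) = S * V := by
    ext k i
    rw [Matrix.mul_diagonal]
    by_cases hi : d i = 0
    · have hci : c i = 0 := by
        rw [← inner_self_eq_zero (𝕜 := ℝ), hinner i i, Matrix.diagonal_apply_eq, hi]
      have : (S * V) k i = 0 := congrArg (fun x => x k) hci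
      simp [Function.comp, hi, this]
    · have hbi : b i = v i := hb i hi
      have hsq : Real.sqrt (d i) ≠ 0 := by
        simpa [Real.sqrt_eq_zero (hd i)] using hi
      have : U k i = (Real.sqrt (d i))⁻¹ * (S * V) k i := by
        simp only [hUdef, Matrix.of_apply, hbi, hvdef]
        rfl
      rw [this]
      field_simp [Function.comp]
      simp only [Function.comp_apply]; ring
  refine ⟨U * Vᵀ, ?_, ?_⟩
  · rw [Matrix.transpose_mul, Matrix.transpose_transpose, Matrix.mul_assoc,
      ← Matrix.mul_assoc Vᵀ V Uᵀ, hVsV, Matrix.one_mul, hUUt]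
  · rw [Matrix.PosSemidef.sqrt]
    change S = U * Vᵀ * ((hA.eigenvectorUnitary : Matrix (Fin N) (Fin N) ℝ) *
      diagonal ((RCLike.ofReal : ℝ → ℝ) ∘ Real.sqrt ∘ hA.eigenvalues) *
      star (hA.eigenvectorUnitary : Matrix (Fin N) (Fin N) ℝ))
    rw [← hVdef, hVt]
    have hdiag : diagonal ((RCLike.ofReal : ℝ → ℝ) ∘ Real.sqrt ∘ hA.eigenvalues)
        = diagonal (Real.sqrt ∘ d) := by
      rw [RCLike.ofReal_real_eq_id]; rfl
    rw [hdiag]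
    calc S = S * V * Vᵀ := by rw [Matrix.mul_assoc, hVVs, Matrix.mul_one]
      _ = U * diagonal (Real.sqrt ∘ d) * Vᵀ := by rw [hcol]
      _ = U * Vᵀ * (V * diagonal (Real.sqrt ∘ d) * Vᵀ) := by
          simp only [Matrix.mul_assoc, ← Matrix.mul_assoc Vᵀ V _, hVsV, Matrix.one_mul]

/-- For any real square matrix `S`, the supremum of `Tr (U * S)` over orthogonal
matrices `U` equals `Tr (√(Sᵀ S))` (the Schatten-1 / nuclear norm of `S`),
and the supremum is attained. -/
theorem sup_trace_orthogonal_mul_eq_nuclearNorm (N : ℕ) (S : Matrix (Fin N) (Fin N) ℝ) :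
    IsGreatest {t : ℝ | ∃ U : Matrix (Fin N) (Fin N) ℝ, U * Uᵀ = 1 ∧ t = (U * S).trace}
      ((Matrix.posSemidef_conjTranspose_mul_self S).sqrt.trace) := by
  obtain ⟨W, hW, hS⟩ := aux_polar S
  set P := (Matrix.posSemidef_conjTranspose_mul_self S).sqrt with hPdef
  have hPpsd : P.PosSemidef := (Matrix.posSemidef_conjTranspose_mul_self S).posSemidef_sqrt
  constructor
  · refine ⟨Wᵀ, ?_, ?_⟩
    · rw [Matrix.transpose_transpose]
      exact mul_eq_one_comm.mp hW
    · rw [hS, ← Matrix.mul_assoc, mul_eq_one_comm.mp hW, Matrix.one_mul]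
  · rintro t ⟨U, hU, rfl⟩
    rw [hS, ← Matrix.mul_assoc]
    refine aux_trace_le ?_ hPpsd
    rw [Matrix.transpose_mul, Matrix.mul_assoc, ← Matrix.mul_assoc W Wᵀ Uᵀ, hW,
      Matrix.one_mul, hU]
end

section
/- Let σ²_X > 0, D > 0, P ≥ 0, and suppose (D,P) satisfies √P ≤ σ_X − √|σ²_X − D| (Case III region). Then with a = (σ²_X + (σ_X − √P)² − D)/(2σ²_X) and σ²_W = D − (1−a)²σ²_X, the pair (a, σ²_W) satisfies both constraints with equality: (1−a)²σ²_X + σ²_W = D and (σ_X − √(a²σ²_X + σ²_W))² = P, and σ²_W ≥ 0. -/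
/-- Case III of the scalar Gaussian RDPF under MSE distortion and squared
Wasserstein-2 perception: with `a = (σX² + (σX − √P)² − D)/(2σX²)` and
`σW² = D − (1−a)² σX²`, both constraints hold with equality and `σW² ≥ 0`. -/
theorem scalar_gaussian_rdpf_w2_caseIII (σX D P : ℝ)
    (hσ : 0 < σX) (hD : 0 < D) (hP : 0 ≤ P)
    (hregion : Real.sqrt P ≤ σX - Real.sqrt |σX ^ 2 - D|) :
    let a : ℝ := (σX ^ 2 + (σX - Real.sqrt P) ^ 2 - D) / (2 * σX ^ 2)
    let σW2 : ℝ := D - (1 - a) ^ 2 * σX ^ 2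
    (1 - a) ^ 2 * σX ^ 2 + σW2 = D ∧
    (σX - Real.sqrt (a ^ 2 * σX ^ 2 + σW2)) ^ 2 = P ∧
    0 ≤ σW2 := by
  intro a σW2
  set p := Real.sqrt P with hp
  have hp0 : 0 ≤ p := Real.sqrt_nonneg P
  have hs0 : 0 ≤ Real.sqrt |σX ^ 2 - D| := Real.sqrt_nonneg _
  have hps : p ≤ σX - Real.sqrt |σX ^ 2 - D| := hregion
  have hple : p ≤ σX := by linarith
  have habs : |σX ^ 2 - D| ≤ (σX - p) ^ 2 := by
    have h1 : Real.sqrt |σX ^ 2 - D| ≤ σX - p := by linarith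
    have := Real.sq_sqrt (abs_nonneg (σX ^ 2 - D))
    nlinarith [Real.sqrt_nonneg |σX ^ 2 - D|]
  have habs2 : (σX ^ 2 - D) ^ 2 ≤ ((σX - p) ^ 2) ^ 2 := by
    have h0 : 0 ≤ (σX - p) ^ 2 := sq_nonneg _
    have h1 : -((σX - p) ^ 2) ≤ σX ^ 2 - D := by
      cases abs_le.mp habs; linarith
    have h2 : σX ^ 2 - D ≤ (σX - p) ^ 2 := by
      cases abs_le.mp habs; linarith
    nlinarith
  have hs2 : (σX : ℝ) ^ 2 ≠ 0 := by positivity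
  have hkey : a ^ 2 * σX ^ 2 + σW2 = (σX - p) ^ 2 := by
    show ((σX ^ 2 + (σX - p) ^ 2 - D) / (2 * σX ^ 2)) ^ 2 * σX ^ 2 +
      (D - (1 - (σX ^ 2 + (σX - p) ^ 2 - D) / (2 * σX ^ 2)) ^ 2 * σX ^ 2) = (σX - p) ^ 2
    field_simp
    ring
  have hW : 0 ≤ σW2 := by
    show 0 ≤ D - (1 - (σX ^ 2 + (σX - p) ^ 2 - D) / (2 * σX ^ 2)) ^ 2 * σX ^ 2
    rw [sub_nonneg]
    have hc : (σX - p) ^ 2 ≤ σX ^ 2 + D := by nlinarith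
    have key : (σX ^ 2 - (σX - p) ^ 2 + D) ^ 2 ≤ 4 * σX ^ 2 * D := by nlinarith
    have h1 : (1 - (σX ^ 2 + (σX - p) ^ 2 - D) / (2 * σX ^ 2)) =
        (σX ^ 2 - (σX - p) ^ 2 + D) / (2 * σX ^ 2) := by field_simp; ring
    rw [h1, div_pow, div_mul_eq_mul_div, div_le_iff₀ (by positivity : (0:ℝ) < (2 * σX ^ 2) ^ 2)]
    nlinarith
  refine ⟨by ring, ?_, hW⟩
  rw [hkey, Real.sqrt_sq (by linarith : 0 ≤ σX - p)]
  have : σX - (σX - p) = p := by ring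
  rw [this, hp, Real.sq_sqrt hP]
end

section
/- Let σ²_X > 0, and for P ≥ 0 define g(P) = 1/W_{-1}(−e^{−(2P+1)}) where W_{-1} is the secondary real branch of the Lambert W function. If (D,P) satisfies |σ²_X − D|/σ²_X ≤ −g(P), then with a = (1/2)(1 − D/σ²_X − g(P)) and σ²_W = D − (1−a)²σ²_X, one has (1−a)²σ²_X + σ²_W = D and the direct KL divergence constraint holds with equality: log(σ²_X̂/σ²_X) + σ²_X/σ²_X̂ − 1 = 2P, where σ²_X̂ = a²σ²_X + σ²_W. -/
/-!
The quadratic terms in `a` cancel, so the reconstruction variance is the affine expression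
`(2a - 1) σX² + D`, which for this choice of `a` equals `-g σX² = σX² / (-w)`. The perception
constraint therefore reads `-log(-w) - w - 1 = 2P`, and this is the logarithm of the Lambert
equation `(-w) e^w = e^{-(2P+1)}`.
-/

open Real

theorem log_neg_add_self_of_mul_exp_eq_neg_exp {w c : ℝ} (h : w * exp w = -exp c) :
    log (-w) + w = c := by
  have h' : -w * exp w = exp c := by rw [neg_mul, h, neg_neg]
  have hw : -w ≠ 0 := fun hw => exp_ne_zero c (by rw [← h', hw, zero_mul])
  have hlog := log_mul hw (exp_ne_zero w)
  rw [h', log_exp, log_exp] at hlog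
  linarith

theorem sq_mul_add_sub_one_sub_sq_mul_of_half {s D g : ℝ} (hs : s ≠ 0) :
    ((1 / 2) * (1 - D / s - g)) ^ 2 * s + (D - (1 - (1 / 2) * (1 - D / s - g)) ^ 2 * s)
      = s * -g := by
  field_simp
  ring

theorem log_mul_div_add_div_mul_sub_one {s r : ℝ} (hs : s ≠ 0) :
    log (s * r / s) + s / (s * r) - 1 = log r + r⁻¹ - 1 := by
  rw [mul_div_cancel_left₀ r hs, div_mul_cancel_left₀ hs]

theorem scalar_gaussian_rdpf_kl_caseIII_general (σX D P : ℝ)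
    (hσ : 0 < σX)
    (w : ℝ)
    (hw_eq : w * Real.exp w = -Real.exp (-(2 * P + 1))) :
    let g : ℝ := 1 / w
    let a : ℝ := (1 / 2) * (1 - D / σX ^ 2 - g)
    let σW2 : ℝ := D - (1 - a) ^ 2 * σX ^ 2
    let σXh2 : ℝ := a ^ 2 * σX ^ 2 + σW2
    (1 - a) ^ 2 * σX ^ 2 + σW2 = D ∧
    Real.log (σXh2 / σX ^ 2) + σX ^ 2 / σXh2 - 1 = 2 * P := by
  intro g a σW2 σXh2
  have hσ2 : σX ^ 2 ≠ 0 := by positivity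
  have hσXh2 : σXh2 = σX ^ 2 * -g := sq_mul_add_sub_one_sub_sq_mul_of_half hσ2
  have hlambert := log_neg_add_self_of_mul_exp_eq_neg_exp hw_eq
  refine ⟨by ring, ?_⟩
  rw [hσXh2, log_mul_div_add_div_mul_sub_one hσ2]
  have hlog_g : log (-g) = -log (-w) := by
    simp only [g, one_div, log_neg_eq_log, log_inv]
  have hinv_g : (-g)⁻¹ = -w := by simp only [g, one_div, ← inv_neg, inv_inv]
  rw [hlog_g, hinv_g]
  linarith

/-- Case III of the scalar Gaussian RDPF under MSE distortion and direct KL perception.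
Here `g(P) = 1/W_{-1}(−e^{−(2P+1)})`, where `W_{-1}` is the secondary real branch of
the Lambert W function, encoded by a real `w ≤ −1` with `w e^w = −e^{−(2P+1)}`.
If `|σX² − D|/σX² ≤ −g(P)`, then with `a = (1/2)(1 − D/σX² − g(P))` and
`σW² = D − (1−a)² σX²`, the distortion constraint holds with equality and the direct KL
perception constraint holds with equality. -/
theorem scalar_gaussian_rdpf_kl_caseIII (σX D P : ℝ)
    (hσ : 0 < σX) (hD : 0 < D) (hP : 0 ≤ P)
    (w : ℝ) (hw_branch : w ≤ -1)
    (hw_eq : w * Real.exp w = -Real.exp (-(2 * P + 1)))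
    (hregion : |σX ^ 2 - D| / σX ^ 2 ≤ -(1 / w)) :
    let g : ℝ := 1 / w
    let a : ℝ := (1 / 2) * (1 - D / σX ^ 2 - g)
    let σW2 : ℝ := D - (1 - a) ^ 2 * σX ^ 2
    let σXh2 : ℝ := a ^ 2 * σX ^ 2 + σW2
    (1 - a) ^ 2 * σX ^ 2 + σW2 = D ∧
    Real.log (σXh2 / σX ^ 2) + σX ^ 2 / σXh2 - 1 = 2 * P :=
  scalar_gaussian_rdpf_kl_caseIII_general σX D P hσ w hw_eq
end

section
/- Let g(P) = (1 − √(1 − (1 − P/2)⁴))/(1 − P/2)⁴ for 0 ≤ P < 2. Then g is well-defined, satisfies 1/2 ≤ g(P) ≤ 1 with g(0) = 1, and for σ²_X > 0 and any D with 2σ²_X(1 − g(P)) ≤ D ≤ 2σ²_X g(P), setting a = g(P) − D/(2σ²_X) and σ²_X̂ = D + (2a − 1)σ²_X, the squared Hellinger perception constraint holds with equality: 1 − √(2σ_X σ_X̂/(σ²_X + σ²_X̂)) = P/2, i.e., H²(N(0,σ²_X), N(0,σ²_X̂)) = P. -/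
/-!
Write `c = (1 - P/2)⁴` and `t = √(1 - c)`. Since `c = (1 - t)(1 + t)`, the gain is
`g(P) = 1/(1 + t) ∈ [1/2, 1]`. The reconstruction variance does not depend on `D`: it is
`σX̂² = (2g - 1) σX²`, so `2σXσX̂/(σX² + σX̂²) = √(2g - 1)/g = √(1 - (1/g - 1)²) = √(1 - t²) = √c`,
which is `(1 - P/2)²`.
-/

open Real

lemma two_mul_mul_sqrt_mul_sq_div_sq_add_mul_sq {σ : ℝ} (hσ : 0 < σ) (s : ℝ) :
    2 * σ * √(s * σ ^ 2) / (σ ^ 2 + s * σ ^ 2) = 2 * √s / (1 + s) := by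
  rw [sqrt_mul' s (sq_nonneg σ), sqrt_sq hσ.le]
  field_simp

lemma two_mul_sqrt_two_mul_sub_one_div_eq_sqrt {g : ℝ} (hg : 0 < g) :
    2 * √(2 * g - 1) / (1 + (2 * g - 1)) = √(1 - (g⁻¹ - 1) ^ 2) := by
  have hratio : 1 - (g⁻¹ - 1) ^ 2 = (2 * g - 1) / g ^ 2 := by
    field_simp
    ring
  rw [hratio, sqrt_div' _ (sq_nonneg g), sqrt_sq hg.le]
  field_simp
  ring

lemma one_sub_sqrt_one_sub_div_self {c : ℝ} (hc0 : 0 < c) (hc1 : c ≤ 1) :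
    (1 - √(1 - c)) / c = (1 + √(1 - c))⁻¹ := by
  have hsq : √(1 - c) ^ 2 = 1 - c := sq_sqrt (by linarith)
  have hpos : 0 < 1 + √(1 - c) := by positivity
  rw [div_eq_iff hc0.ne', eq_comm, inv_mul_eq_iff_eq_mul₀ hpos.ne']
  linear_combination hsq

lemma inv_one_add_mem_Icc {t : ℝ} (ht0 : 0 ≤ t) (ht1 : t ≤ 1) :
    (1 + t)⁻¹ ∈ Set.Icc (1 / 2) 1 := by
  constructor
  · rw [← one_div, div_le_div_iff₀ two_pos (by linarith)]
    linarith
  · exact inv_le_one_of_one_le₀ (by linarith)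

theorem scalar_gaussian_rdpf_hellinger_caseIII_general (σX D P : ℝ)
    (hσ : 0 < σX) (hP0 : 0 ≤ P) (hP2 : P < 2) :
    let g : ℝ → ℝ := fun Q => (1 - Real.sqrt (1 - (1 - Q / 2) ^ 4)) / (1 - Q / 2) ^ 4
    let a : ℝ := g P - D / (2 * σX ^ 2)
    let σXh2 : ℝ := D + (2 * a - 1) * σX ^ 2
    (1 / 2 ≤ g P ∧ g P ≤ 1) ∧ g 0 = 1 ∧
    1 - Real.sqrt (2 * σX * Real.sqrt σXh2 / (σX ^ 2 + σXh2)) = P / 2 := by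
  intro g a σXh2
  have hu0 : 0 < 1 - P / 2 := by linarith
  have hu1 : 1 - P / 2 ≤ 1 := by linarith
  have hc1 : (1 - P / 2) ^ 4 ≤ 1 := pow_le_one₀ hu0.le hu1
  have hg : g P = (1 + √(1 - (1 - P / 2) ^ 4))⁻¹ :=
    one_sub_sqrt_one_sub_div_self (by positivity) hc1
  have hgP : 1 / 2 ≤ g P ∧ g P ≤ 1 :=
    hg ▸ inv_one_add_mem_Icc (sqrt_nonneg _) (sqrt_le_one.mpr (by linarith [pow_nonneg hu0.le 4]))
  have hσXh2 : σXh2 = (2 * g P - 1) * σX ^ 2 := by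
    simp only [σXh2, a]
    field_simp
    ring
  have hcoef : 2 * σX * √σXh2 / (σX ^ 2 + σXh2) = (1 - P / 2) ^ 2 := by
    rw [hσXh2, two_mul_mul_sqrt_mul_sq_div_sq_add_mul_sq hσ,
      two_mul_sqrt_two_mul_sub_one_div_eq_sqrt (by linarith), hg, inv_inv, add_sub_cancel_left,
      sq_sqrt (by linarith), sub_sub_cancel, show (1 - P / 2) ^ 4 = ((1 - P / 2) ^ 2) ^ 2 by ring,
      sqrt_sq (sq_nonneg _)]
  refine ⟨hgP, by norm_num [g], ?_⟩
  rw [hcoef, sqrt_sq hu0.le]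
  ring

/-- Case III of the scalar Gaussian RDPF under MSE distortion and squared Hellinger
perception: with `g(P) = (1 − √(1 − (1 − P/2)⁴))/(1 − P/2)⁴` for `0 ≤ P < 2`, one has
`1/2 ≤ g(P) ≤ 1`, `g(0) = 1`, and for `σX² > 0` and `2σX²(1 − g(P)) ≤ D ≤ 2σX² g(P)`,
setting `a = g(P) − D/(2σX²)` and `σX̂² = D + (2a − 1)σX²`, the Hellinger perception
constraint holds with equality:
`1 − √(2 σX σX̂ / (σX² + σX̂²)) = P/2`, i.e. `H²(N(0,σX²), N(0,σX̂²)) = P`. -/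
theorem scalar_gaussian_rdpf_hellinger_caseIII (σX D P : ℝ)
    (hσ : 0 < σX) (hP0 : 0 ≤ P) (hP2 : P < 2)
    (hD_lo : 2 * σX ^ 2 *
        (1 - (1 - Real.sqrt (1 - (1 - P / 2) ^ 4)) / (1 - P / 2) ^ 4) ≤ D)
    (hD_hi : D ≤ 2 * σX ^ 2 *
        ((1 - Real.sqrt (1 - (1 - P / 2) ^ 4)) / (1 - P / 2) ^ 4)) :
    let g : ℝ → ℝ := fun Q => (1 - Real.sqrt (1 - (1 - Q / 2) ^ 4)) / (1 - Q / 2) ^ 4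
    let a : ℝ := g P - D / (2 * σX ^ 2)
    let σXh2 : ℝ := D + (2 * a - 1) * σX ^ 2
    (1 / 2 ≤ g P ∧ g P ≤ 1) ∧ g 0 = 1 ∧
    1 - Real.sqrt (2 * σX * Real.sqrt σXh2 / (σX ^ 2 + σXh2)) = P / 2 :=
  scalar_gaussian_rdpf_hellinger_caseIII_general σX D P hσ hP0 hP2
end
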